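/- arXiv:1606.09631 — 4 statements merged into one kernel-verified Lean document; each statement's English description precedes it below -/
import Mathlib

section
/- Let $K$ be a field, $x \in K$ with $x \neq 0$, and let $v_1, v_2, v_3, v_4 \in \mathbb{Z}^2$ satisfy the balancing condition $v_1 + v_2 + v_3 + v_4 = 0$. With $A_{ij} = \det(v_i, v_j)$, one has $(x^{A_{12}} - x^{-A_{12}})(x^{A_{34}} - x^{-A_{34}}) + (x^{A_{23}} - x^{-A_{23}})(x^{A_{14}} - x^{-A_{14}}) + (x^{A_{13}} - x^{-A_{13}})(x^{A_{42}} - x^{-A_{42}}) = 0$. (This is the wall-crossing relation in case (B) of the invariance proof for refined broccoli invariants, after clearing the denominator $(x - x^{-1})^2$; it follows from the linear relations $A_{12}+A_{13}+A_{14}=0$, $A_{12}-A_{23}+A_{42}=0$, $A_{13}+A_{23}-A_{34}=0$ implied by the balancing condition.) -/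
/-- The determinant of the `2 × 2` matrix with columns `v, w ∈ ℤ²`. -/
def det2 (v w : ℤ × ℤ) : ℤ := v.1 * w.2 - v.2 * w.1

/-- Wall-crossing relation in case (B) of the invariance proof for refined
broccoli invariants, after clearing the denominator `(x - x⁻¹)²`. -/
theorem caseB_wall_crossing {K : Type*} [Field K] (x : K) (hx : x ≠ 0)
    (v₁ v₂ v₃ v₄ : ℤ × ℤ) (hbal : v₁ + v₂ + v₃ + v₄ = 0) :
    (x ^ det2 v₁ v₂ - x ^ (-det2 v₁ v₂)) * (x ^ det2 v₃ v₄ - x ^ (-det2 v₃ v₄))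
      + (x ^ det2 v₂ v₃ - x ^ (-det2 v₂ v₃)) * (x ^ det2 v₁ v₄ - x ^ (-det2 v₁ v₄))
      + (x ^ det2 v₁ v₃ - x ^ (-det2 v₁ v₃)) * (x ^ det2 v₄ v₂ - x ^ (-det2 v₄ v₂)) = 0 := by
  have h1 : v₁.1 + v₂.1 + v₃.1 + v₄.1 = 0 := by
    have := congrArg Prod.fst hbal; simpa using this
  have h2 : v₁.2 + v₂.2 + v₃.2 + v₄.2 = 0 := by
    have := congrArg Prod.snd hbal; simpa using this
  have e34 : det2 v₃ v₄ = det2 v₁ v₃ + det2 v₂ v₃ := by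
    simp only [det2]; linear_combination v₃.1 * h2 - v₃.2 * h1
  have e14 : det2 v₁ v₄ = -(det2 v₁ v₂ + det2 v₁ v₃) := by
    simp only [det2]; linear_combination v₁.1 * h2 - v₁.2 * h1
  have e42 : det2 v₄ v₂ = det2 v₂ v₃ - det2 v₁ v₂ := by
    simp only [det2]; linear_combination v₂.2 * h1 - v₂.1 * h2
  set a := det2 v₁ v₂
  set b := det2 v₁ v₃
  set c := det2 v₂ v₃
  rw [e34, e14, e42]
  have hz : ∀ n : ℤ, x ^ (-n) = (x ^ n)⁻¹ := fun n => zpow_neg x n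
  simp only [neg_add, neg_sub, hz, zpow_add₀ hx, zpow_sub₀ hx, mul_inv]
  field_simp
  ring
end

section
/- Let $K$ be a field, $x \in K$ with $x \neq 0$, and let $v_1, v_2, v_3, v_4 \in \mathbb{Z}^2$ satisfy the balancing condition $v_1 + v_2 + v_3 + v_4 = 0$. With $A_{ij} = \det(v_i, v_j)$, one has $(x^{A_{12}} - x^{-A_{12}})(x^{A_{34}} + x^{-A_{34}}) + (x^{A_{23}} + x^{-A_{23}})(x^{A_{14}} - x^{-A_{14}}) + (x^{A_{13}} - x^{-A_{13}})(x^{A_{42}} + x^{-A_{42}}) = 0$. (This is the wall-crossing relation in case (C) of the invariance proof for refined broccoli invariants, after clearing the denominator $(x - x^{-1})(x + x^{-1})$.) -/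
lemma caseC_key {K : Type*} [Field K] (x : K) (hx : x ≠ 0) (p q r : ℤ) :
    (x ^ p - x ^ (-p)) * (x ^ (q + r) + x ^ (-(q + r)))
      + (x ^ r + x ^ (-r)) * (x ^ (-(p + q)) - x ^ (-(-(p + q))))
      + (x ^ q - x ^ (-q)) * (x ^ (r - p) + x ^ (-(r - p))) = 0 := by
  have hp := zpow_ne_zero p hx
  have hq := zpow_ne_zero q hx
  have hr := zpow_ne_zero r hx
  simp only [zpow_add₀ hx, zpow_sub₀ hx, zpow_neg, neg_neg, mul_inv]
  field_simp
  ring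

/-- Wall-crossing relation in case (C) of the invariance proof for refined
broccoli invariants, after clearing the denominator `(x - x⁻¹)(x + x⁻¹)`. -/
theorem caseC_wall_crossing {K : Type*} [Field K] (x : K) (hx : x ≠ 0)
    (v₁ v₂ v₃ v₄ : ℤ × ℤ) (hbal : v₁ + v₂ + v₃ + v₄ = 0) :
    (x ^ det2 v₁ v₂ - x ^ (-det2 v₁ v₂)) * (x ^ det2 v₃ v₄ + x ^ (-det2 v₃ v₄))
      + (x ^ det2 v₂ v₃ + x ^ (-det2 v₂ v₃)) * (x ^ det2 v₁ v₄ - x ^ (-det2 v₁ v₄))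
      + (x ^ det2 v₁ v₃ - x ^ (-det2 v₁ v₃)) * (x ^ det2 v₄ v₂ + x ^ (-det2 v₄ v₂)) = 0 := by
  have h1 : v₄.1 = -(v₁.1 + v₂.1 + v₃.1) := by
    have := congrArg Prod.fst hbal; simp at this; linarith
  have h2 : v₄.2 = -(v₁.2 + v₂.2 + v₃.2) := by
    have := congrArg Prod.snd hbal; simp at this; linarith
  have e1 : det2 v₃ v₄ = det2 v₁ v₃ + det2 v₂ v₃ := by simp [det2, h1, h2]; ring
  have e2 : det2 v₁ v₄ = -(det2 v₁ v₂ + det2 v₁ v₃) := by simp [det2, h1, h2]; ring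
  have e3 : det2 v₄ v₂ = det2 v₂ v₃ - det2 v₁ v₂ := by simp [det2, h1, h2]; ring
  rw [e1, e2, e3]
  simpa using caseC_key x hx (det2 v₁ v₂) (det2 v₁ v₃) (det2 v₂ v₃)
end

section
/- Let $K$ be a field, $x \in K$ with $x \neq 0$, and let $v_1, v_2, v_3, v_4 \in \mathbb{Z}^2$ satisfy the balancing condition $v_1 + v_2 + v_3 + v_4 = 0$. With $A_{ij} = \det(v_i, v_j)$, one has $(x^{A_{12}} + x^{-A_{12}})(x^{A_{34}} - x^{-A_{34}}) + (x^{A_{13}} + x^{-A_{13}})(x^{A_{24}} - x^{-A_{24}}) + (x^{A_{23}} + x^{-A_{23}})(x^{A_{14}} - x^{-A_{14}}) = 0$. (This is the identity showing that, in the codimension-1 case (D1) of the refined bridge discussion, the sum of the refined multiplicities of the three resolutions IV, II and III is $0$, after clearing the denominator $(x + x^{-1})(x - x^{-1})$.) -/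
/-- The sum of the refined multiplicities of the three resolutions IV, II and III
in the codimension-1 case (D1) of the refined bridge discussion is `0`, after
clearing the denominator `(x + x⁻¹)(x - x⁻¹)`. -/
theorem caseD1_bridge_relation {K : Type*} [Field K] (x : K) (hx : x ≠ 0)
    (v₁ v₂ v₃ v₄ : ℤ × ℤ) (hbal : v₁ + v₂ + v₃ + v₄ = 0) :
    (x ^ det2 v₁ v₂ + x ^ (-det2 v₁ v₂)) * (x ^ det2 v₃ v₄ - x ^ (-det2 v₃ v₄))
      + (x ^ det2 v₁ v₃ + x ^ (-det2 v₁ v₃)) * (x ^ det2 v₂ v₄ - x ^ (-det2 v₂ v₄))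
      + (x ^ det2 v₂ v₃ + x ^ (-det2 v₂ v₃)) * (x ^ det2 v₁ v₄ - x ^ (-det2 v₁ v₄)) = 0 := by
  have h1 : v₄.1 = -(v₁.1 + v₂.1 + v₃.1) := by
    have := congrArg Prod.fst hbal
    simp [Prod.fst_add] at this
    linarith
  have h2 : v₄.2 = -(v₁.2 + v₂.2 + v₃.2) := by
    have := congrArg Prod.snd hbal
    simp [Prod.snd_add] at this
    linarith
  have e34 : det2 v₃ v₄ = det2 v₁ v₃ + det2 v₂ v₃ := by simp [det2, h1, h2]; ring
  have e24 : det2 v₂ v₄ = det2 v₁ v₂ - det2 v₂ v₃ := by simp [det2, h1, h2]; ring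
  have e14 : det2 v₁ v₄ = -(det2 v₁ v₂) - det2 v₁ v₃ := by simp [det2, h1, h2]; ring
  set a := det2 v₁ v₂
  set b := det2 v₁ v₃
  set c := det2 v₂ v₃
  rw [e34, e24, e14]
  have ha : x ^ a ≠ 0 := zpow_ne_zero _ hx
  have hb : x ^ b ≠ 0 := zpow_ne_zero _ hx
  have hc : x ^ c ≠ 0 := zpow_ne_zero _ hx
  simp only [neg_add, neg_sub, sub_neg_eq_add, neg_neg, zpow_add₀ hx, zpow_sub₀ hx,
    zpow_neg]
  field_simp
  ring
end

section
/- Let $a_1, \ldots, a_n$ be positive integers, let $M = \prod_{j=1}^{n} a_j$, and let $i \in \mathbb{C}$ denote the imaginary unit. Then $\prod_{j=1}^{n} \left( \sum_{k=0}^{a_j - 1} i^{\,a_j - 1 - 2k} \right)$ equals $0$ if $M$ is even, equals $1$ if $M \equiv 1 \pmod 4$, and equals $-1$ if $M \equiv 3 \pmod 4$. (This is the interpolation theorem $\mathrm{mult}(C; -1) = \mathrm{mult}_{\mathbb{R}}(C)$ at the level of vertex multiplicities: for a simple tropical curve $C$ with $3$-valent vertex Mikhalkin multiplicities $a_1, \ldots,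 a_n$, the refined curve multiplicity $\mathrm{mult}(C; y) = \prod_j [a_j]_y$ specializes at $y = -1$ to Mikhalkin's real curve multiplicity $\mathrm{mult}_{\mathbb{R}}(C)$, which is $0$ if $\mathrm{mult}_{\mathbb{C}}(C) = M$ is even, $1$ if $M \equiv 1 \bmod 4$, and $-1$ if $M \equiv 3 \bmod 4$.) -/
open Complex Finset

lemma vertex_sum_eq_chi4 (a : ℕ) (ha : 0 < a) :
    ∑ k ∈ Finset.range a, Complex.I ^ ((a : ℤ) - 1 - 2 * k) = ((ZMod.χ₄ a : ℤ) : ℂ) := by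
  have hIne : (Complex.I : ℂ) ≠ 0 := Complex.I_ne_zero
  have hterm : ∀ k : ℕ, Complex.I ^ ((a : ℤ) - 1 - 2 * k)
      = Complex.I ^ ((a : ℤ) - 1) * (-1 : ℂ) ^ k := by
    intro k
    rw [zpow_sub₀ hIne]
    rw [show ((2 : ℤ) * k) = ((2 * k : ℕ) : ℤ) by push_cast; ring, zpow_natCast,
      pow_mul, Complex.I_sq]
    rw [div_eq_mul_inv]
    rw [← inv_pow]
    norm_num
  simp only [hterm, ← Finset.mul_sum, neg_one_geom_sum]
  rw [ZMod.χ₄_nat_eq_if_mod_four]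
  rcases Nat.even_or_odd a with he | ho
  · simp [he, Nat.even_iff.mp he]
  · have h2 : a % 2 = 1 := Nat.odd_iff.mp ho
    have h4 := Nat.mod_two_eq_zero_or_one (a % 4 / 2)
    have : a % 4 = 1 ∨ a % 4 = 3 := by omega
    rcases this with h | h
    · obtain ⟨q, hq⟩ : ∃ q, a = 4 * q + 1 := ⟨a / 4, by omega⟩
      subst hq
      have : ((4 * q + 1 : ℕ) : ℤ) - 1 = 4 * q := by push_cast; ring
      rw [this, zpow_mul]
      norm_num [show (Complex.I : ℂ) ^ (4:ℤ) = 1 by norm_num [zpow_ofNat, Complex.I_pow_four],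
        h2, h]
    · obtain ⟨q, hq⟩ : ∃ q, a = 4 * q + 3 := ⟨a / 4, by omega⟩
      subst hq
      have : ((4 * q + 3 : ℕ) : ℤ) - 1 = 4 * q + 2 := by push_cast; ring
      rw [this, zpow_add₀ hIne, zpow_mul]
      norm_num [show (Complex.I : ℂ) ^ (4:ℤ) = 1 by norm_num [zpow_ofNat, Complex.I_pow_four],
        show (Complex.I : ℂ) ^ (2:ℤ) = -1 by norm_num [zpow_ofNat, Complex.I_sq], h2, h]
      exact ⟨2*q+1, by ring⟩

/-- Interpolation at the level of vertex multiplicities: for positive integers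
`a₁,…,a_n` with `M = ∏ⱼ aⱼ`, the product `∏ⱼ [aⱼ]_{y=-1} = ∏ⱼ ∑_{k=0}^{aⱼ-1} i^{aⱼ-1-2k}`
equals `0` if `M` is even, `1` if `M ≡ 1 (mod 4)`, and `-1` if `M ≡ 3 (mod 4)`;
i.e. the refined curve multiplicity specializes at `y = -1` to Mikhalkin's real
curve multiplicity. -/
theorem refined_curve_multiplicity_at_minus_one (n : ℕ) (a : Fin n → ℕ)
    (ha : ∀ j, 0 < a j) (M : ℕ) (hM : M = ∏ j, a j) :
    (Even M → ∏ j, ∑ k ∈ Finset.range (a j), Complex.I ^ ((a j : ℤ) - 1 - 2 * k) = 0) ∧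
    (M % 4 = 1 → ∏ j, ∑ k ∈ Finset.range (a j), Complex.I ^ ((a j : ℤ) - 1 - 2 * k) = 1) ∧
    (M % 4 = 3 → ∏ j, ∑ k ∈ Finset.range (a j), Complex.I ^ ((a j : ℤ) - 1 - 2 * k) = -1) := by
  have key : ∏ j, ∑ k ∈ Finset.range (a j), Complex.I ^ ((a j : ℤ) - 1 - 2 * k)
      = ((ZMod.χ₄ M : ℤ) : ℂ) := by
    calc ∏ j, ∑ k ∈ Finset.range (a j), Complex.I ^ ((a j : ℤ) - 1 - 2 * k)
        = ∏ j, ((ZMod.χ₄ (a j) : ℤ) : ℂ) := by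
          exact Finset.prod_congr rfl fun j _ => vertex_sum_eq_chi4 (a j) (ha j)
      _ = ((ZMod.χ₄ M : ℤ) : ℂ) := by
          rw [hM]
          push_cast [← map_prod]
          norm_num
  rw [key, ZMod.χ₄_nat_eq_if_mod_four]
  refine ⟨fun h => ?_, fun h => ?_, fun h => ?_⟩
  · simp [Nat.even_iff.mp h]
  · have : M % 2 = 1 := by omega
    simp [this, h]
  · have : M % 2 = 1 := by omega
    simp [this, h]
end
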